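/- Let f be differentiable on an open interval containing [a,b] (a < b) with f' integrable, let θ, λ ∈ [0,1], q > 1 with 1/p + 1/q = 1, and set C = (1−λ)a + λb. If |f'|^q is quasi-convex on [a,b], then |(1−θ)(λ f(a) + (1−λ) f(b)) + θ f(C) − (1/(b−a)) ∫_a^b f(x) dx| ≤ (b−a) ((θ^(p+1) + (1−θ)^(p+1))/(p+1))^(1/p) [ λ² (max{|f'(a)|^q, |f'(C)|^q})^(1/q) + (1−λ)² (max{|f'(b)|^q, |f'(C)|^q})^(1/q) ]. -/

import Mathlib

/-!
Integrating by parts against the Peano kernel `x - (a + (1 - θ)(C - a))` on `[a, C]` and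
`x - (C + θ(b - C))` on `[C, b]` turns the left-hand side into `1/(b - a)` times the integral of
the kernel against `f'`. Quasi-convexity of `|f'|^q` bounds `|f'|` on each piece by the `q`-th root
of the larger endpoint value, and the kernel has `L¹` norm `ℓ²(θ² + (1 - θ)²)/2` on a piece of
length `ℓ`. This gives the bound with the constant `(θ² + (1 - θ)²)/2`, which is at most the
`p`-dependent one.
-/

open MeasureTheory Set intervalIntegral

theorem QuasiconvexOn.le_max_of_mem_segment {𝕜 E β : Type*} [Semiring 𝕜] [PartialOrder 𝕜]
    [AddCommMonoid E] [SMul 𝕜 E] [LinearOrder β] {s : Set E} {g : E → β}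
    (hg : QuasiconvexOn 𝕜 s g) {u v x : E} (hu : u ∈ s) (hv : v ∈ s)
    (hx : x ∈ segment 𝕜 u v) : g x ≤ max (g u) (g v) :=
  ((hg _).segment_subset ⟨hu, le_max_left _ _⟩ ⟨hv, le_max_right _ _⟩ hx).2

theorem quasiconvexOn_Icc_of_le_max {β : Type*} [LinearOrder β] {g : ℝ → β} {a b : ℝ}
    (hg : ∀ x ∈ Icc a b, ∀ y ∈ Icc a b, ∀ α ∈ Icc (0 : ℝ) 1,
      g (α * x + (1 - α) * y) ≤ max (g x) (g y)) :
    QuasiconvexOn ℝ (Icc a b) g := by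
  refine quasiconvexOn_iff_le_max.2 ⟨convex_Icc a b, fun x hx y hy α β hα hβ hαβ => ?_⟩
  obtain rfl : β = 1 - α := by linarith
  exact hg x hx y hy α ⟨hα, by linarith⟩

theorem abs_le_max_rpow_of_quasiconvexOn {g : ℝ → ℝ} {s : Set ℝ} {q u v x : ℝ} (hq : 0 < q)
    (hg : QuasiconvexOn ℝ s fun y => |g y| ^ q) (hu : u ∈ s) (hv : v ∈ s) (hx : x ∈ Icc u v) :
    |g x| ≤ max (|g u| ^ q) (|g v| ^ q) ^ (1 / q) := by
  rw [one_div, Real.le_rpow_inv_iff_of_pos (abs_nonneg _)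
    (le_max_of_le_left (by positivity)) hq]
  exact hg.le_max_of_mem_segment hu hv (by rwa [segment_eq_Icc (hx.1.trans hx.2)])

theorem integral_abs_sub_of_mem_Icc {u v X : ℝ} (hX : X ∈ Icc u v) :
    ∫ x in u..v, |x - X| = ((X - u) ^ 2 + (v - X) ^ 2) / 2 := by
  have hneg : ∫ x in u - X..0, |x| = ∫ x in u - X..0, -x :=
    integral_congr fun x hx => abs_of_nonpos (by
      rw [uIcc_of_le (by linarith [hX.1])] at hx; exact hx.2)
  have hpos : ∫ x in (0 : ℝ)..v - X, |x| = ∫ x in (0 : ℝ)..v - X, x :=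
    integral_congr fun x hx => abs_of_nonneg (by
      rw [uIcc_of_le (by linarith [hX.2])] at hx; exact hx.1)
  rw [integral_comp_sub_right (fun x => |x|),
    ← integral_add_adjacent_intervals (b := 0) (continuous_abs.intervalIntegrable _ _)
      (continuous_abs.intervalIntegrable _ _), hneg, hpos, intervalIntegral.integral_neg,
    integral_id, integral_id]
  ring

theorem integral_sub_mul_deriv_eq {f f' : ℝ → ℝ} {u v X : ℝ}
    (hf : ∀ x ∈ uIcc u v, HasDerivAt f (f' x) x) (hf' : IntervalIntegrable f' volume u v) :
    ∫ x in u..v, (x - X) * f' x = (v - X) * f v - (u - X) * f u - ∫ x in u..v, f x := by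
  simpa using integral_mul_deriv_eq_deriv_mul (fun x _ => (hasDerivAt_id x).sub_const X) hf
    intervalIntegrable_const hf'

theorem abs_integral_sub_mul_le {f' : ℝ → ℝ} {u v t K : ℝ} (huv : u ≤ v) (ht : t ∈ Icc (0 : ℝ) 1)
    (hf' : IntervalIntegrable f' volume u v) (hK : ∀ x ∈ Icc u v, |f' x| ≤ K) :
    |∫ x in u..v, (x - (u + t * (v - u))) * f' x|
      ≤ K * ((v - u) ^ 2 * (t ^ 2 + (1 - t) ^ 2) / 2) := by
  set X := u + t * (v - u)
  have hX : X ∈ Icc u v := ⟨by nlinarith [ht.1], by nlinarith [ht.2]⟩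
  have hcont : Continuous fun x => |x - X| := continuous_abs.comp (continuous_sub_right X)
  calc |∫ x in u..v, (x - X) * f' x| ≤ ∫ x in u..v, |(x - X) * f' x| :=
        abs_integral_le_integral_abs huv
    _ ≤ ∫ x in u..v, |x - X| * K := by
        refine integral_mono_on huv ?_ ((hcont.mul continuous_const).intervalIntegrable _ _)
          fun x hx => ?_
        · exact (hf'.continuousOn_mul (continuous_sub_right X).continuousOn).abs
        · rw [abs_mul]
          exact mul_le_mul_of_nonneg_left (hK x hx) (abs_nonneg _)
    _ = K * ((v - u) ^ 2 * (t ^ 2 + (1 - t) ^ 2) / 2) := by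
        rw [intervalIntegral.integral_mul_const, integral_abs_sub_of_mem_Icc hX]
        ring

section SimpsonType

variable {f f' : ℝ → ℝ} {a b C θ lam : ℝ}

theorem simpson_type_sub_average_eq (hab : a < b) (hlam : lam ∈ Icc (0 : ℝ) 1)
    (hC : C = (1 - lam) * a + lam * b) (hf : ∀ x ∈ Icc a b, HasDerivAt f (f' x) x)
    (hf' : IntervalIntegrable f' volume a b) :
    (1 - θ) * (lam * f a + (1 - lam) * f b) + θ * f C - (1 / (b - a)) * ∫ x in a..b, f x
      = ((∫ x in a..C, (x - (a + (1 - θ) * (C - a))) * f' x)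
          + ∫ x in C..b, (x - (C + θ * (b - C))) * f' x) / (b - a) := by
  have haC : a ≤ C := by nlinarith [hlam.1]
  have hCb : C ≤ b := by nlinarith [hlam.2]
  have hsub₁ : uIcc a C ⊆ Icc a b := by rw [uIcc_of_le haC]; exact Icc_subset_Icc le_rfl hCb
  have hsub₂ : uIcc C b ⊆ Icc a b := by rw [uIcc_of_le hCb]; exact Icc_subset_Icc haC le_rfl
  have hfc : ContinuousOn f (Icc a b) := fun x hx => (hf x hx).continuousAt.continuousWithinAt
  have hba : b - a ≠ 0 := (sub_pos.2 hab).ne'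
  rw [integral_sub_mul_deriv_eq (fun x hx => hf x (hsub₁ hx))
      (hf'.mono_set (by rwa [uIcc_of_le hab.le])),
    integral_sub_mul_deriv_eq (fun x hx => hf x (hsub₂ hx))
      (hf'.mono_set (by rwa [uIcc_of_le hab.le])),
    ← integral_add_adjacent_intervals (hfc.mono hsub₁).intervalIntegrable
      (hfc.mono hsub₂).intervalIntegrable, hC]
  field_simp
  ring

theorem abs_simpson_type_sub_average_le {K₁ K₂ : ℝ} (hab : a < b) (hθ : θ ∈ Icc (0 : ℝ) 1)
    (hlam : lam ∈ Icc (0 : ℝ) 1) (hC : C = (1 - lam) * a + lam * b)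
    (hf : ∀ x ∈ Icc a b, HasDerivAt f (f' x) x) (hf' : IntervalIntegrable f' volume a b)
    (hK₁ : ∀ x ∈ Icc a C, |f' x| ≤ K₁) (hK₂ : ∀ x ∈ Icc C b, |f' x| ≤ K₂) :
    |(1 - θ) * (lam * f a + (1 - lam) * f b) + θ * f C - (1 / (b - a)) * ∫ x in a..b, f x|
      ≤ (b - a) * ((θ ^ 2 + (1 - θ) ^ 2) / 2) * (lam ^ 2 * K₁ + (1 - lam) ^ 2 * K₂) := by
  have haC : a ≤ C := by nlinarith [hlam.1]
  have hCb : C ≤ b := by nlinarith [hlam.2]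
  have h₁ := abs_integral_sub_mul_le haC ⟨sub_nonneg.2 hθ.2, sub_le_self _ hθ.1⟩
    (hf'.mono_set (by rw [uIcc_of_le haC, uIcc_of_le hab.le]; exact Icc_subset_Icc le_rfl hCb)) hK₁
  have h₂ := abs_integral_sub_mul_le hCb hθ
    (hf'.mono_set (by rw [uIcc_of_le hCb, uIcc_of_le hab.le]; exact Icc_subset_Icc haC le_rfl)) hK₂
  rw [simpson_type_sub_average_eq hab hlam hC hf hf', abs_div, abs_of_pos (sub_pos.2 hab)]
  calc _ ≤ (K₁ * ((C - a) ^ 2 * ((1 - θ) ^ 2 + (1 - (1 - θ)) ^ 2) / 2)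
          + K₂ * ((b - C) ^ 2 * (θ ^ 2 + (1 - θ) ^ 2) / 2)) / (b - a) := by
        gcongr
        exact (abs_add_le _ _).trans (add_le_add h₁ h₂)
    _ = _ := by
        have hba : b - a ≠ 0 := (sub_pos.2 hab).ne'
        rw [hC]
        field_simp
        ring

end SimpsonType

theorem sq_add_sq_le_rpow_add_rpow {s t p : ℝ} (hs : 0 ≤ s) (ht : 0 ≤ t) (hst : s + t = 1)
    (hp : 1 ≤ p) : s ^ 2 + t ^ 2 ≤ (s ^ (p + 1) + t ^ (p + 1)) ^ (1 / p) := by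
  rw [one_div, Real.le_rpow_inv_iff_of_pos (by positivity) (by positivity) (by linarith),
    Real.rpow_add_one' hs (by linarith), Real.rpow_add_one' ht (by linarith)]
  simpa only [smul_eq_mul, sq, mul_comm _ s, mul_comm _ t]
    using (convexOn_rpow hp).2 (mem_Ici.2 hs) (mem_Ici.2 ht) hs ht hst

theorem add_one_rpow_one_div_le_two {p : ℝ} (hp : 1 ≤ p) : (p + 1) ^ (1 / p) ≤ 2 := by
  rw [one_div, Real.rpow_inv_le_iff_of_pos (by linarith) zero_le_two (by linarith)]
  have := one_add_mul_self_le_rpow_one_add (s := 1) (by norm_num) hp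
  norm_num at this
  linarith

/-- The two sides are the `L¹` and `Lᵖ` norms of `t ↦ |t - θ|` on `[0, 1]`. -/
theorem sq_add_sq_div_two_le_rpow {θ p : ℝ} (hθ : θ ∈ Icc (0 : ℝ) 1) (hp : 1 ≤ p) :
    (θ ^ 2 + (1 - θ) ^ 2) / 2 ≤ ((θ ^ (p + 1) + (1 - θ) ^ (p + 1)) / (p + 1)) ^ (1 / p) := by
  have hθ' : 0 ≤ 1 - θ := sub_nonneg.2 hθ.2
  have hS : 0 ≤ θ ^ (p + 1) + (1 - θ) ^ (p + 1) :=
    add_nonneg (Real.rpow_nonneg hθ.1 _) (Real.rpow_nonneg hθ' _)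
  rw [Real.div_rpow hS (by linarith)]
  calc (θ ^ 2 + (1 - θ) ^ 2) / 2 ≤ (θ ^ (p + 1) + (1 - θ) ^ (p + 1)) ^ (1 / p) / 2 := by
        gcongr
        exact sq_add_sq_le_rpow_add_rpow hθ.1 hθ' (by ring) hp
    _ ≤ _ := div_le_div_of_nonneg_left (by positivity) (by positivity)
        (add_one_rpow_one_div_le_two hp)

theorem stmt_9 (f f' : ℝ → ℝ) (a b θ lam p q c d : ℝ) (hab : a < b)
    (hθ : θ ∈ Set.Icc (0:ℝ) 1) (hlam : lam ∈ Set.Icc (0:ℝ) 1)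
    (hq : 1 < q) (hpq : 1 / p + 1 / q = 1)
    (hca : c < a) (hbd : b < d)
    (hf : ∀ x ∈ Set.Ioo c d, HasDerivAt f (f' x) x)
    (hint : IntervalIntegrable f' volume a b)
    (hqc : ∀ x ∈ Set.Icc a b, ∀ y ∈ Set.Icc a b, ∀ α ∈ Set.Icc (0:ℝ) 1,
      |f' (α * x + (1 - α) * y)| ^ q ≤ max (|f' x| ^ q) (|f' y| ^ q)) :
    |(1 - θ) * (lam * f a + (1 - lam) * f b) + θ * f ((1 - lam) * a + lam * b)
        - (1 / (b - a)) * ∫ x in a..b, f x|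
      ≤ (b - a) * ((θ ^ (p + 1) + (1 - θ) ^ (p + 1)) / (p + 1)) ^ (1 / p) *
          (lam ^ 2 * (max (|f' a| ^ q) (|f' ((1 - lam) * a + lam * b)| ^ q)) ^ (1 / q)
            + (1 - lam) ^ 2 * (max (|f' b| ^ q) (|f' ((1 - lam) * a + lam * b)| ^ q)) ^ (1 / q)) := by
  have hp : 1 < p :=
    (Real.holderConjugate_iff.2 ⟨hq, by simpa [one_div, add_comm] using hpq⟩).symm.lt
  set C := (1 - lam) * a + lam * b with hC
  have hC_mem : C ∈ Icc a b := ⟨by nlinarith [hlam.1], by nlinarith [hlam.2]⟩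
  have hg : QuasiconvexOn ℝ (Icc a b) fun x => |f' x| ^ q := quasiconvexOn_Icc_of_le_max hqc
  have hK₁ : ∀ x ∈ Icc a C, |f' x| ≤ max (|f' a| ^ q) (|f' C| ^ q) ^ (1 / q) := fun x hx =>
    abs_le_max_rpow_of_quasiconvexOn (by linarith) hg (left_mem_Icc.2 hab.le) hC_mem hx
  have hK₂ : ∀ x ∈ Icc C b, |f' x| ≤ max (|f' b| ^ q) (|f' C| ^ q) ^ (1 / q) := fun x hx => by
    rw [max_comm]
    exact abs_le_max_rpow_of_quasiconvexOn (by linarith) hg hC_mem (right_mem_Icc.2 hab.le) hx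
  calc _ ≤ (b - a) * ((θ ^ 2 + (1 - θ) ^ 2) / 2) * _ :=
        abs_simpson_type_sub_average_le hab hθ hlam hC
          (fun x hx => hf x ⟨hca.trans_le hx.1, hx.2.trans_lt hbd⟩) hint hK₁ hK₂
    _ ≤ _ := by
        have := sub_pos.2 hab
        gcongr
        exact sq_add_sq_div_two_le_rpow hθ hp.le
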